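/- If a directed graph G = (V, A) is strongly connected, S ⊆ V, and the induced subgraph on V\S is strongly connected, then for each weakly connected component S_i of the induced subgraph on S there exist an arc from V\S into S_i and an arc from S_i into V\S; consequently there exists a closed directed walk starting and ending at any fixed vertex of V\S that visits S_i and no other component of S. -/

import Mathlib

/-!
Following any directed path from outside `S` to a vertex of `Sᵢ` we must cross an arc into `Sᵢ`,
and its tail cannot lie in `S` because `Sᵢ` is a component of `G(S)`; symmetrically for an arc
out of `Sᵢ`. For the closed walk from `d ∉ S`, walk inside `G(V∖S)` to the tail of an entering
arc, take that arc, then follow a path of `G` to a vertex outside `S` up to the first moment it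
leaves `S` (until then it stays in `Sᵢ`), and return to `d` inside `G(V∖S)`. Every vertex of `S`
on this walk lies in `Sᵢ`.
-/

namespace Relation.ReflTransGen

theorem exists_mem_notMem {α : Type*} {r : α → α → Prop} {s : Set α} {u v : α}
    (h : ReflTransGen r u v) (hu : u ∈ s) (hv : v ∉ s) :
    ∃ x y, r x y ∧ x ∈ s ∧ y ∉ s := by
  by_contra! hclosed
  induction h with
  | refl => exact hv hu
  | tail _ hxy ih => exact hv (hclosed _ _ hxy (not_not.mp ih))

end Relation.ReflTransGen

open Relation

section Digraph

variable {V A : Type} (tail head : A → V)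

def Arc (x y : V) : Prop := ∃ a, tail a = x ∧ head a = y

def InducedArc (T : Set V) (x y : V) : Prop := ∃ a, tail a = x ∧ head a = y ∧ x ∈ T ∧ y ∈ T

def IsWalk {k : ℕ} (w : Fin (k + 1) → V) (e : Fin k → A) : Prop :=
  ∀ j : Fin k, tail (e j) = w j.castSucc ∧ head (e j) = w j.succ

variable {tail head}

theorem InducedArc.mono {T T' : Set V} (hT : T ⊆ T') :
    InducedArc tail head T ≤ InducedArc tail head T' :=
  fun _ _ ⟨a, ht, hh, hx, hy⟩ => ⟨a, ht, hh, hT hx, hT hy⟩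

theorem IsWalk.snoc {k : ℕ} {w : Fin (k + 1) → V} {e : Fin k → A}
    (hw : IsWalk tail head w e) {a : A} (ha : tail a = w (Fin.last k)) :
    IsWalk tail head (Fin.snoc w (head a) : Fin (k + 2) → V)
      (Fin.snoc e a : Fin (k + 1) → A) := by
  intro j
  cases j using Fin.lastCases with
  | last => simp [ha]
  | cast i => simpa only [Fin.snoc_castSucc, Fin.succ_castSucc] using hw i

theorem IsWalk.exists_extend {T : Set V} {k : ℕ} {w : Fin (k + 1) → V} {e : Fin k → A}
    (hw : IsWalk tail head w e) (hwT : ∀ j, w j ∈ T) {v : V}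
    (h : ReflTransGen (InducedArc tail head T) (w (Fin.last k)) v) :
    ∃ (k' : ℕ) (w' : Fin (k' + 1) → V) (e' : Fin k' → A), IsWalk tail head w' e' ∧
      w' 0 = w 0 ∧ w' (Fin.last k') = v ∧ (∀ j, w' j ∈ T) ∧ Set.range w ⊆ Set.range w' := by
  induction h with
  | refl => exact ⟨k, w, e, hw, rfl, rfl, hwT, subset_rfl⟩
  | tail _ hstep ih =>
    obtain ⟨k', w', e', hw', h0, hlast, hT', hrange⟩ := ih
    obtain ⟨a, rfl, rfl, -, hv⟩ := hstep
    refine ⟨k' + 1, Fin.snoc w' (head a), Fin.snoc e' a, hw'.snoc hlast.symm, ?_, by simp,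
      ?_, hrange.trans (by simp [Set.subset_insert])⟩
    · simpa using h0
    · intro j
      cases j using Fin.lastCases with
      | last => simpa using hv
      | cast i => simpa using hT' i

theorem exists_closed_isWalk_through {T : Set V} {d x : V} (hd : d ∈ T)
    (hdx : ReflTransGen (InducedArc tail head T) d x)
    (hxd : ReflTransGen (InducedArc tail head T) x d) :
    ∃ (k : ℕ) (w : Fin (k + 1) → V) (e : Fin k → A), IsWalk tail head w e ∧
      w 0 = d ∧ w (Fin.last k) = d ∧ x ∈ Set.range w ∧ ∀ j, w j ∈ T := by
  obtain ⟨k₁, w₁, e₁, hw₁, h0₁, hlast₁, hT₁, -⟩ :=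
    IsWalk.exists_extend (w := fun _ : Fin 1 => d) (e := Fin.elim0) (fun j => j.elim0)
      (fun _ => hd) hdx
  obtain ⟨k, w, e, hw, h0, hlast, hT, hrange⟩ := hw₁.exists_extend hT₁ (hlast₁ ▸ hxd)
  exact ⟨k, w, e, hw, h0.trans h0₁, hlast, hrange ⟨_, hlast₁⟩, hT⟩

variable {S Si : Set V}

theorem exists_arc_into_of_reflTransGen (hin : ∀ a, head a ∈ Si → tail a ∈ S → tail a ∈ Si)
    {u v : V} (h : ReflTransGen (Arc tail head) u v) (hu : u ∉ Si) (hv : v ∈ Si) :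
    ∃ a, tail a ∉ S ∧ head a ∈ Si := by
  obtain ⟨_, _, ⟨a, rfl, rfl⟩, ht, hh⟩ := h.exists_mem_notMem (s := Siᶜ) hu (not_not.mpr hv)
  exact ⟨a, fun hS => ht (hin a (not_not.mp hh) hS), not_not.mp hh⟩

theorem exists_arc_out_of_reflTransGen (hout : ∀ a, tail a ∈ Si → head a ∈ S → head a ∈ Si)
    {u v : V} (h : ReflTransGen (Arc tail head) u v) (hu : u ∈ Si) (hv : v ∉ Si) :
    ∃ a, tail a ∈ Si ∧ head a ∉ S := by
  obtain ⟨_, _, ⟨a, rfl, rfl⟩, ht, hh⟩ := h.exists_mem_notMem hu hv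
  exact ⟨a, ht, fun hS => hh (hout a ht hS)⟩

theorem exists_reflTransGen_inducedArc_exit
    (hout : ∀ a, tail a ∈ Si → head a ∈ S → head a ∈ Si) {u v : V}
    (h : ReflTransGen (Arc tail head) u v) (hu : u ∈ Si) (hv : v ∉ S) :
    ∃ z ∉ S, ReflTransGen (InducedArc tail head (Si ∪ Sᶜ)) u z := by
  induction h using ReflTransGen.head_induction_on with
  | refl => exact ⟨_, hv, .refl⟩
  | head hstep _ ih =>
    obtain ⟨a, rfl, rfl⟩ := hstep
    by_cases ha : head a ∈ S
    · obtain ⟨z, hz, hpath⟩ := ih (hout a hu ha)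
      exact ⟨z, hz, .head ⟨a, rfl, rfl, .inl hu, .inl (hout a hu ha)⟩ hpath⟩
    · exact ⟨head a, ha, .single ⟨a, rfl, rfl, .inl hu, .inr ha⟩⟩

end Digraph

theorem component_entry_exit_and_walk_general
    {V A : Type}
    (tail head : A → V)
    (hstrong : ∀ u v : V, Relation.ReflTransGen
      (fun x y => ∃ a, tail a = x ∧ head a = y) u v)
    (S : Set V) (hproper : S ≠ Set.univ)
    (hVS : ∀ u ∉ S, ∀ v ∉ S, Relation.ReflTransGen
      (fun x y => ∃ a, tail a = x ∧ head a = y ∧ x ∉ S ∧ y ∉ S) u v)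
    (Si : Set V) (hSiS : Si ⊆ S) (hSine : Si.Nonempty)
    (hSimax : ∀ x ∈ Si, ∀ y : V,
      ((∃ a, (tail a = x ∧ head a = y) ∨ (tail a = y ∧ head a = x)) ∧ x ∈ S ∧ y ∈ S)
      → y ∈ Si) :
    (∃ a, tail a ∉ S ∧ head a ∈ Si) ∧
    (∃ a, tail a ∈ Si ∧ head a ∉ S) ∧
    (∀ d ∉ S, ∃ (k : ℕ) (w : Fin (k + 1) → V) (e : Fin k → A),
      (∀ j : Fin k, tail (e j) = w j.castSucc ∧ head (e j) = w j.succ) ∧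
      w 0 = d ∧ w (Fin.last k) = d ∧
      (∃ j, w j ∈ Si) ∧ (∀ j, w j ∈ S → w j ∈ Si)) := by
  obtain ⟨d₀, hd₀⟩ := (Set.ne_univ_iff_exists_notMem S).mp hproper
  obtain ⟨x₀, hx₀⟩ := hSine
  have hout : ∀ a, tail a ∈ Si → head a ∈ S → head a ∈ Si := fun a ht hh =>
    hSimax _ ht _ ⟨⟨a, .inl ⟨rfl, rfl⟩⟩, hSiS ht, hh⟩
  have hin : ∀ a, head a ∈ Si → tail a ∈ S → tail a ∈ Si := fun a hh ht =>
    hSimax _ hh _ ⟨⟨a, .inr ⟨rfl, rfl⟩⟩, hSiS hh, ht⟩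
  have hentry : ∃ a, tail a ∉ S ∧ head a ∈ Si :=
    exists_arc_into_of_reflTransGen hin (hstrong d₀ x₀) (fun h => hd₀ (hSiS h)) hx₀
  have hexit : ∃ a, tail a ∈ Si ∧ head a ∉ S :=
    exists_arc_out_of_reflTransGen hout (hstrong x₀ d₀) hx₀ (fun h => hd₀ (hSiS h))
  refine ⟨hentry, hexit, fun d hd => ?_⟩
  obtain ⟨a, hta, hha⟩ := hentry
  have hlift : ∀ u ∉ S, ∀ v ∉ S, ReflTransGen (InducedArc tail head (Si ∪ Sᶜ)) u v :=
    fun u hu v hv => ReflTransGen.mono (InducedArc.mono Set.subset_union_right) _ _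
      (hVS u hu v hv : ReflTransGen (InducedArc tail head Sᶜ) u v)
  have hdx : ReflTransGen (InducedArc tail head (Si ∪ Sᶜ)) d (head a) :=
    (hlift d hd (tail a) hta).tail ⟨a, rfl, rfl, .inr hta, .inl hha⟩
  have hxd : ReflTransGen (InducedArc tail head (Si ∪ Sᶜ)) (head a) d := by
    obtain ⟨z, hz, hpath⟩ :=
      exists_reflTransGen_inducedArc_exit hout (hstrong (head a) d) hha hd
    exact hpath.trans (hlift z hz d hd)
  obtain ⟨k, w, e, hw, h0, hlast, ⟨j, hj⟩, hT⟩ :=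
    exists_closed_isWalk_through (.inr hd) hdx hxd
  exact ⟨k, w, e, hw, h0, hlast, ⟨j, hj ▸ hha⟩,
    fun j hS => (hT j).resolve_right (not_not.mpr hS)⟩

/-- If `G` is strongly connected, `S ⊆ V` proper and nonempty with `G(V\S)`
strongly connected, then every weakly connected component `Si` of the induced
subgraph on `S` admits an arc entering it from `V\S` and an arc leaving it into
`V\S`; consequently, from every vertex `d ∉ S` there is a closed directed walk
visiting `Si` and meeting no other component of `S`. -/
theorem component_entry_exit_and_walk
    {V A : Type} [Fintype V] [Fintype A]
    (tail head : A → V)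
    (hstrong : ∀ u v : V, Relation.ReflTransGen
      (fun x y => ∃ a, tail a = x ∧ head a = y) u v)
    (S : Set V) (hne : S.Nonempty) (hproper : S ≠ Set.univ)
    (hVS : ∀ u ∉ S, ∀ v ∉ S, Relation.ReflTransGen
      (fun x y => ∃ a, tail a = x ∧ head a = y ∧ x ∉ S ∧ y ∉ S) u v)
    (Si : Set V) (hSiS : Si ⊆ S) (hSine : Si.Nonempty)
    (hSiconn : ∀ x ∈ Si, ∀ y ∈ Si, Relation.ReflTransGen
      (fun x y => (∃ a, (tail a = x ∧ head a = y) ∨ (tail a = y ∧ head a = x))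
        ∧ x ∈ S ∧ y ∈ S) x y)
    (hSimax : ∀ x ∈ Si, ∀ y : V,
      ((∃ a, (tail a = x ∧ head a = y) ∨ (tail a = y ∧ head a = x)) ∧ x ∈ S ∧ y ∈ S)
      → y ∈ Si) :
    (∃ a, tail a ∉ S ∧ head a ∈ Si) ∧
    (∃ a, tail a ∈ Si ∧ head a ∉ S) ∧
    (∀ d ∉ S, ∃ (k : ℕ) (w : Fin (k + 1) → V) (e : Fin k → A),
      (∀ j : Fin k, tail (e j) = w j.castSucc ∧ head (e j) = w j.succ) ∧
      w 0 = d ∧ w (Fin.last k) = d ∧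
      (∃ j, w j ∈ Si) ∧ (∀ j, w j ∈ S → w j ∈ Si)) :=
  component_entry_exit_and_walk_general tail head hstrong S hproper hVS Si hSiS hSine hSimax
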